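/- arXiv:1911.01714 — 5 statements merged into one kernel-verified Lean document; each statement's English description precedes it below -/
import Mathlib

section
/- For a ∈ K and γ ∈ Λ, the mapping ω_{a,γ} defined by ω_{a,γ}(Σ_s a_s(x−a)^s) = min_s{v(a_s)+sγ} is a valuation on K[x] extending v, and the set of Λ∞-valued valuations ρ extending v with ρ < ω_{a,γ} equals {ω_{a,δ} | δ ∈ Λ, δ < γ}. -/
open Polynomial Finset

variable {K : Type*} [Field K] {Λ : Type*} [AddCommGroup Λ] [LinearOrder Λ] [IsOrderedAddMonoid Λ]

/-- `v` is a valuation on the field `K` with values in `Λ∞ = WithTop Λ`. -/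
def IsVal (v : K → WithTop Λ) : Prop :=
  (∀ a, v a = ⊤ ↔ a = 0) ∧ v 1 = 0 ∧ (∀ a b, v (a * b) = v a + v b) ∧
    (∀ a b, min (v a) (v b) ≤ v (a + b))

/-- `μ` is a valuation on `K[x]` extending `v`. -/
def ExtVal (v : K → WithTop Λ) (μ : Polynomial K → WithTop Λ) : Prop :=
  (∀ f g, μ (f * g) = μ f + μ g) ∧ (∀ f g, min (μ f) (μ g) ≤ μ (f + g)) ∧
    (∀ a, μ (Polynomial.C a) = v a)

/-- `h` divides `g` μ-equivalently (`h ∣_μ g`): there is `q` with `μ(g - q h) > μ(g)`. -/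
def MuDvd (μ : Polynomial K → WithTop Λ) (h g : Polynomial K) : Prop :=
  ∃ q : Polynomial K, μ g < μ (g - q * h)

/-- `φ` is μ-minimal: `φ ∤_μ f` for every nonzero `f` of degree less than `deg φ`. -/
def MuMinimal (μ : Polynomial K → WithTop Λ) (φ : Polynomial K) : Prop :=
  ∀ f : Polynomial K, f ≠ 0 → f.degree < φ.degree → ¬ MuDvd μ φ f

/-- `φ` is μ-irreducible: the principal ideal generated by `in_μ φ` in the graded
algebra is a nonzero prime ideal (stated via μ-divisibility). -/
def MuIrreducible (μ : Polynomial K → WithTop Λ) (φ : Polynomial K) : Prop :=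
  μ φ ≠ ⊤ ∧ ¬ MuDvd μ φ 1 ∧
    ∀ f g : Polynomial K, MuDvd μ φ (f * g) → MuDvd μ φ f ∨ MuDvd μ φ g

/-- A (MacLane–Vaquié) key polynomial for `μ`. -/
def KeyPoly (μ : Polynomial K → WithTop Λ) (φ : Polynomial K) : Prop :=
  φ.Monic ∧ MuMinimal μ φ ∧ MuIrreducible μ φ

/-- `μ'` is the augmented valuation `[μ; φ, γ]`: on φ-expansions
`f = Σ a_s φ^s` (with `deg a_s < deg φ`), `μ' f = min_s (μ(a_s) + s·γ)`. -/
def AugVal (μ : Polynomial K → WithTop Λ) (φ : Polynomial K) (γ : WithTop Λ)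
    (μ' : Polynomial K → WithTop Λ) : Prop :=
  ∀ (f : Polynomial K) (n : ℕ) (a : ℕ → Polynomial K),
    (∀ s, (a s).degree < φ.degree) →
    f = ∑ s ∈ Finset.range n, a s * φ ^ s →
    μ' f = (Finset.range n).inf fun s => μ (a s) + s • γ

/-- `ω` is the depth-zero valuation `ω_{a,γ}`. -/
def DepthZeroVal (v : K → WithTop Λ) (a : K) (γ : WithTop Λ)
    (ω : Polynomial K → WithTop Λ) : Prop :=
  ∀ (f : Polynomial K) (n : ℕ) (c : ℕ → K),
    f = ∑ s ∈ Finset.range n, Polynomial.C (c s) * (Polynomial.X - Polynomial.C a) ^ s →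
    ω f = (Finset.range n).inf fun s => v (c s) + s • γ

/-!
After the substitution `X ↦ X + a` (Taylor expansion at `a`), `ω_{a,δ}` becomes the Gauss
valuation `Σ c_s X^s ↦ min_s (v c_s + s δ)`. The Gauss valuation is multiplicative: if `i` and `j`
are the least indices at which the minima for `f` and `g` are attained, then in the coefficient
of `X^(i+j)` of `f g` the product `f_i g_j` strictly dominates all other products.

Conversely, let `ρ ≤ ω_{a,γ}` extend `v` and put `δ = ρ (X - a)`, so `δ ≤ γ`. Translating `a` to
`0`, the bound becomes `ρ g ≤ ω_{0,γ} g ≤ v (g 0)`. Writing `g = g' X + g 0`, this bound forces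
`ρ g = min (v (g 0)) (ρ g' + δ)`, the recursion that the Gauss valuation of weight `δ` satisfies;
induction on the degree gives `ρ = ω_{a,δ}`, and `ρ ≠ ω_{a,γ}` excludes `δ = γ`.
-/

theorem WithTop.nsmul_coe_ne_top {α : Type*} [AddMonoid α] (n : ℕ) (a : α) :
    n • (a : WithTop α) ≠ ⊤ := by
  rw [← WithTop.coe_nsmul]; exact WithTop.coe_ne_top

namespace Polynomial

variable {R : Type*} [CommRing R]

def gaussVal (v : AddValuation R (WithTop Λ)) (δ : Λ) (g : R[X]) : WithTop Λ :=
  g.support.inf fun s => v (g.coeff s) + s • (δ : WithTop Λ)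

variable {v : AddValuation R (WithTop Λ)} {δ : Λ}

theorem le_gaussVal_iff {m : WithTop Λ} {g : R[X]} :
    m ≤ gaussVal v δ g ↔ ∀ s, m ≤ v (g.coeff s) + s • (δ : WithTop Λ) := by
  refine Finset.le_inf_iff.trans ⟨fun h s => ?_, fun h s _ => h s⟩
  by_cases hs : s ∈ g.support
  · exact h s hs
  · simp [notMem_support_iff.mp hs]

theorem gaussVal_le (g : R[X]) (s : ℕ) : gaussVal v δ g ≤ v (g.coeff s) + s • (δ : WithTop Λ) :=
  le_gaussVal_iff.mp le_rfl s

@[simp]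
theorem gaussVal_zero : gaussVal v δ (0 : R[X]) = ⊤ := rfl

theorem exists_least_eq_gaussVal {g : R[X]} (hg : gaussVal v δ g ≠ ⊤) :
    ∃ i, v (g.coeff i) + i • (δ : WithTop Λ) = gaussVal v δ g ∧
      ∀ k < i, gaussVal v δ g < v (g.coeff k) + k • (δ : WithTop Λ) := by
  have hex : ∃ i, v (g.coeff i) + i • (δ : WithTop Λ) = gaussVal v δ g := by
    have hg' : g.support.Nonempty := support_nonempty.mpr (by rintro rfl; exact hg rfl)
    obtain ⟨i, -, hi⟩ := g.support.exists_mem_eq_inf hg' fun s => v (g.coeff s) + s • (δ : WithTop Λ)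
    exact ⟨i, hi.symm⟩
  exact ⟨Nat.find hex, Nat.find_spec hex, fun k hk =>
    (gaussVal_le g k).lt_of_ne fun h => Nat.find_min hex hk h.symm⟩

theorem gaussVal_eq_min_divX (g : R[X]) :
    gaussVal v δ g = min (v (g.coeff 0)) (gaussVal v δ g.divX + δ) := by
  refine le_antisymm (le_min (by simpa using gaussVal_le g 0) ?_) (le_gaussVal_iff.mpr ?_)
  · rcases eq_or_ne (gaussVal v δ g.divX) ⊤ with h | h
    · simp [h]
    obtain ⟨s, hs, -⟩ := exists_least_eq_gaussVal h
    calc gaussVal v δ g ≤ v (g.coeff (s + 1)) + (s + 1) • (δ : WithTop Λ) := gaussVal_le g _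
      _ = gaussVal v δ g.divX + δ := by rw [← hs, coeff_divX, succ_nsmul, add_assoc]
  · rintro (_ | s)
    · simp
    · calc min (v (g.coeff 0)) (gaussVal v δ g.divX + δ) ≤ gaussVal v δ g.divX + δ :=
            min_le_right _ _
        _ ≤ v (g.divX.coeff s) + s • (δ : WithTop Λ) + δ := add_le_add_left (gaussVal_le _ s) _
        _ = _ := by rw [coeff_divX, succ_nsmul, add_assoc]

theorem gaussVal_C (b : R) : gaussVal v δ (C b) = v b := by
  simp [gaussVal_eq_min_divX (C b)]

theorem gaussVal_X : gaussVal v δ (X : R[X]) = δ := by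
  have hdivX : (X : R[X]).divX = C 1 := by ext n; simp [coeff_divX, coeff_X, coeff_one]
  rw [gaussVal_eq_min_divX, hdivX, gaussVal_C]
  simp

theorem min_gaussVal_le_gaussVal_add (f g : R[X]) :
    min (gaussVal v δ f) (gaussVal v δ g) ≤ gaussVal v δ (f + g) :=
  le_gaussVal_iff.mpr fun s => calc
    _ ≤ min (v (f.coeff s) + s • (δ : WithTop Λ)) (v (g.coeff s) + s • (δ : WithTop Λ)) :=
        min_le_min (gaussVal_le f s) (gaussVal_le g s)
    _ = min (v (f.coeff s)) (v (g.coeff s)) + s • (δ : WithTop Λ) := min_add_add_right ..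
    _ ≤ v ((f + g).coeff s) + s • (δ : WithTop Λ) := by
        rw [coeff_add]; exact add_le_add_left (v.map_add _ _) _

theorem gaussVal_add_gaussVal_le_gaussVal_mul (f g : R[X]) :
    gaussVal v δ f + gaussVal v δ g ≤ gaussVal v δ (f * g) := by
  refine le_gaussVal_iff.mpr fun k => ?_
  obtain ⟨x, hx, hx_min⟩ := (antidiagonal k).exists_min_image
    (fun x => v (f.coeff x.1 * g.coeff x.2)) ⟨(0, k), by simp⟩
  calc gaussVal v δ f + gaussVal v δ g
      ≤ v (f.coeff x.1) + x.1 • (δ : WithTop Λ) + (v (g.coeff x.2) + x.2 • (δ : WithTop Λ)) :=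
        add_le_add (gaussVal_le f _) (gaussVal_le g _)
    _ = v (f.coeff x.1 * g.coeff x.2) + k • (δ : WithTop Λ) := by
        rw [v.map_mul, ← mem_antidiagonal.mp hx, add_nsmul, add_add_add_comm]
    _ ≤ v ((f * g).coeff k) + k • (δ : WithTop Λ) := by
        rw [coeff_mul]; exact add_le_add_left (v.map_le_sum hx_min) _

theorem valuation_coeff_mul_eq_of_least {f g : R[X]} {i j : ℕ}
    (hf : gaussVal v δ f ≠ ⊤) (hg : gaussVal v δ g ≠ ⊤)
    (hi : v (f.coeff i) + i • (δ : WithTop Λ) = gaussVal v δ f)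
    (hi_lt : ∀ k < i, gaussVal v δ f < v (f.coeff k) + k • (δ : WithTop Λ))
    (hj : v (g.coeff j) + j • (δ : WithTop Λ) = gaussVal v δ g)
    (hj_lt : ∀ l < j, gaussVal v δ g < v (g.coeff l) + l • (δ : WithTop Λ)) :
    v ((f * g).coeff (i + j)) = v (f.coeff i * g.coeff j) := by
  have hweight : ∀ k l, v (f.coeff k * g.coeff l) + (k + l) • (δ : WithTop Λ) =
      v (f.coeff k) + k • (δ : WithTop Λ) + (v (g.coeff l) + l • (δ : WithTop Λ)) := by
    intro k l; rw [v.map_mul, add_nsmul, add_add_add_comm]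
  have hne_top : v (f.coeff i * g.coeff j) ≠ ⊤ := by
    intro h
    have := hweight i j
    rw [h, top_add, hi, hj] at this
    exact WithTop.add_ne_top.mpr ⟨hf, hg⟩ this.symm
  have hij : (i, j) ∈ antidiagonal (i + j) := mem_antidiagonal.mpr rfl
  rw [coeff_mul, ← add_sum_erase _ _ hij]
  refine v.map_add_eq_of_lt_left (v.map_lt_sum hne_top fun x hx => ?_)
  obtain ⟨hx_ne, hx_mem⟩ := mem_erase.mp hx
  have hsum := mem_antidiagonal.mp hx_mem
  rw [← WithTop.add_lt_add_iff_right (WithTop.nsmul_coe_ne_top (i + j) δ), hweight, hi, hj,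
    ← hsum, hweight]
  rcases lt_or_gt_of_ne (fun h : x.1 = i => hx_ne (Prod.ext h (by omega))) with hlt | hgt
  · exact WithTop.add_lt_add_of_lt_of_le hg (hi_lt _ hlt) (gaussVal_le g _)
  · exact WithTop.add_lt_add_of_le_of_lt hf (gaussVal_le f _) (hj_lt _ (by omega))

theorem gaussVal_mul_le (f g : R[X]) :
    gaussVal v δ (f * g) ≤ gaussVal v δ f + gaussVal v δ g := by
  rcases eq_or_ne (gaussVal v δ f) ⊤ with hf | hf
  · simp [hf]
  rcases eq_or_ne (gaussVal v δ g) ⊤ with hg | hg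
  · simp [hg]
  obtain ⟨i, hi, hi_lt⟩ := exists_least_eq_gaussVal hf
  obtain ⟨j, hj, hj_lt⟩ := exists_least_eq_gaussVal hg
  calc gaussVal v δ (f * g) ≤ v ((f * g).coeff (i + j)) + (i + j) • (δ : WithTop Λ) :=
        gaussVal_le _ _
    _ = gaussVal v δ f + gaussVal v δ g := by
        rw [valuation_coeff_mul_eq_of_least hf hg hi hi_lt hj hj_lt, v.map_mul, add_nsmul,
          add_add_add_comm, hi, hj]

theorem gaussVal_mul (f g : R[X]) : gaussVal v δ (f * g) = gaussVal v δ f + gaussVal v δ g :=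
  (gaussVal_mul_le f g).antisymm (gaussVal_add_gaussVal_le_gaussVal_mul f g)

variable (v δ) in
noncomputable def gaussValuation : AddValuation R[X] (WithTop Λ) :=
  AddValuation.of (gaussVal v δ) gaussVal_zero (by rw [← C_1, gaussVal_C, v.map_one])
    min_gaussVal_le_gaussVal_add gaussVal_mul

theorem gaussValuation_apply (g : R[X]) : gaussValuation v δ g = gaussVal v δ g := rfl

theorem gaussVal_mono {γ : Λ} (h : δ ≤ γ) (g : R[X]) : gaussVal v δ g ≤ gaussVal v γ g :=
  le_gaussVal_iff.mpr fun s =>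
    (gaussVal_le g s).trans
      (add_le_add_right (nsmul_le_nsmul_right (WithTop.coe_le_coe.mpr h) s) _)

theorem gaussVal_sum_C_mul_X_pow (n : ℕ) (c : ℕ → R) :
    gaussVal v δ (∑ s ∈ range n, C (c s) * X ^ s) =
      (range n).inf fun s => v (c s) + s • (δ : WithTop Λ) := by
  refine eq_of_forall_le_iff fun m => ?_
  rw [le_gaussVal_iff, Finset.le_inf_iff]
  refine forall_congr' fun s => ?_
  by_cases hs : s < n <;> simp [hs]

theorem map_eq_min_divX_of_le_coeff_zero (ρ : AddValuation R[X] (WithTop Λ))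
    (hC : ∀ b, ρ (C b) = v b) (hX : ρ X = δ) (hle : ∀ g, ρ g ≤ v (g.coeff 0)) (g : R[X]) :
    ρ g = min (v (g.coeff 0)) (ρ g.divX + δ) := by
  have hsplit : ρ g = ρ (g.divX * X + C (g.coeff 0)) := by rw [divX_mul_X_add]
  rcases lt_or_ge (ρ g.divX + δ) (v (g.coeff 0)) with h | h
  · rw [min_eq_right h.le, hsplit, ρ.map_add_eq_of_lt_left, ρ.map_mul, hX]
    rwa [ρ.map_mul, hX, hC]
  · rw [min_eq_left h]
    refine (hle g).antisymm ?_
    calc v (g.coeff 0) = min (ρ (g.divX * X)) (ρ (C (g.coeff 0))) := by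
          rw [ρ.map_mul, hX, hC, min_eq_right h]
      _ ≤ ρ g := hsplit ▸ ρ.map_add _ _

theorem eq_gaussValuation_of_le_coeff_zero (ρ : AddValuation R[X] (WithTop Λ))
    (hC : ∀ b, ρ (C b) = v b) (hX : ρ X = δ) (hle : ∀ g, ρ g ≤ v (g.coeff 0)) :
    ρ = gaussValuation v δ := by
  ext g
  induction g using degree_lt_wf.induction with
  | _ g ih =>
    rcases eq_or_ne g 0 with rfl | hg
    · simp
    rw [map_eq_min_divX_of_le_coeff_zero ρ hC hX hle, gaussValuation_apply, gaussVal_eq_min_divX,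
      ih _ (degree_divX_lt hg), gaussValuation_apply]

variable (v) in
noncomputable def depthZeroValuation (a : R) (δ : Λ) : AddValuation R[X] (WithTop Λ) :=
  (gaussValuation v δ).comap (taylorAlgHom a : R[X] →+* R[X])

theorem depthZeroValuation_apply (a : R) (f : R[X]) :
    depthZeroValuation v a δ f = gaussVal v δ (taylor a f) := rfl

theorem depthZeroValuation_C (a b : R) : depthZeroValuation v a δ (C b) = v b := by
  rw [depthZeroValuation_apply, taylor_C, gaussVal_C]

theorem depthZeroValuation_X_sub_C (a : R) : depthZeroValuation v a δ (X - C a) = δ := by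
  rw [depthZeroValuation_apply, map_sub, taylor_X, taylor_C, add_sub_cancel_right, gaussVal_X]

theorem depthZeroValuation_mono {γ : Λ} (h : δ ≤ γ) (a : R) (f : R[X]) :
    depthZeroValuation v a δ f ≤ depthZeroValuation v a γ f :=
  gaussVal_mono h _

theorem eq_depthZeroValuation_of_le {γ : Λ} {a : R} (ρ : AddValuation R[X] (WithTop Λ))
    (hC : ∀ b, ρ (C b) = v b) (hX : ρ (X - C a) = δ)
    (hle : ∀ f, ρ f ≤ depthZeroValuation v a γ f) :
    ρ = depthZeroValuation v a δ := by
  have hgauss := eq_gaussValuation_of_le_coeff_zero (v := v) (δ := δ)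
    (ρ.comap (taylorAlgHom (-a) : R[X] →+* R[X])) ?_ ?_ ?_
  · ext f
    have hf : ρ (taylor (-a) (taylor a f)) = gaussVal v δ (taylor a f) :=
      congr($hgauss (taylor a f))
    rwa [taylor_taylor, neg_add_cancel, taylor_zero] at hf
  · intro b
    exact (congrArg ρ (taylor_C _ b)).trans (hC b)
  · show ρ (taylor (-a) X) = δ
    rwa [taylor_X, C_neg, ← sub_eq_add_neg]
  · intro g
    calc ρ (taylor (-a) g) ≤ gaussVal v γ (taylor a (taylor (-a) g)) := hle _
      _ = gaussVal v γ g := by rw [taylor_taylor, add_neg_cancel, taylor_zero]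
      _ ≤ v (g.coeff 0) := by simpa using gaussVal_le (v := v) (δ := γ) g 0

theorem sum_range_taylor_coeff (a : R) (f : R[X]) :
    ∑ s ∈ range ((taylor a f).natDegree + 1), C ((taylor a f).coeff s) * (X - C a) ^ s = f := by
  conv_rhs => rw [← sum_taylor_eq f a, sum_over_range _ (by simp)]

end Polynomial

open Polynomial

theorem depthZeroVal_depthZeroValuation (v : AddValuation K (WithTop Λ)) (a : K) (δ : Λ) :
    DepthZeroVal v a δ (depthZeroValuation v a δ) := by
  intro f n c hf
  rw [depthZeroValuation_apply, hf, map_sum, ← gaussVal_sum_C_mul_X_pow]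
  congr 1
  refine sum_congr rfl fun s _ => ?_
  rw [taylor_mul, taylor_C, taylor_pow, map_sub, taylor_X, taylor_C, add_sub_cancel_right]

theorem DepthZeroVal.eq_depthZeroValuation {v : AddValuation K (WithTop Λ)} {a : K} {δ : Λ}
    {ρ : K[X] → WithTop Λ} (h : DepthZeroVal v a δ ρ) : ρ = depthZeroValuation v a δ := by
  funext f
  have hf := (sum_range_taylor_coeff a f).symm
  rw [h f _ _ hf, depthZeroVal_depthZeroValuation v a δ f _ _ hf]

def IsVal.toAddValuation {v : K → WithTop Λ} (hv : IsVal v) : AddValuation K (WithTop Λ) :=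
  AddValuation.of v ((hv.1 0).mpr rfl) hv.2.1 hv.2.2.2 hv.2.2.1

noncomputable def ExtVal.toAddValuation {v : K → WithTop Λ} {ρ : K[X] → WithTop Λ}
    (hv : IsVal v) (hρ : ExtVal v ρ) : AddValuation K[X] (WithTop Λ) :=
  AddValuation.of ρ (by rw [← C_0, hρ.2.2, (hv.1 0).mpr rfl]) (by rw [← C_1, hρ.2.2, hv.2.1])
    hρ.2.1 hρ.1

theorem extVal_of_map_C {v : K → WithTop Λ} (ρ : AddValuation K[X] (WithTop Λ))
    (hC : ∀ b, ρ (C b) = v b) : ExtVal v ρ :=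
  ⟨ρ.map_mul, ρ.map_add, hC⟩

/-- `ω_{a,γ}` (for `γ ∈ Λ`) is a valuation on `K[x]` extending `v`,
and the valuations strictly below it are exactly the `ω_{a,δ}` with `δ < γ`. -/
theorem depthZero_valuation_and_lowerSet (v : K → WithTop Λ) (hv : IsVal v)
    (a : K) (γ : Λ) (ω : Polynomial K → WithTop Λ)
    (hω : DepthZeroVal v a (γ : WithTop Λ) ω) :
    ExtVal v ω ∧
      {ρ : Polynomial K → WithTop Λ | ExtVal v ρ ∧ (∀ f, ρ f ≤ ω f) ∧ ρ ≠ ω} =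
        {ρ : Polynomial K → WithTop Λ | ∃ δ : Λ, δ < γ ∧ DepthZeroVal v a (δ : WithTop Λ) ρ} := by
  let V := hv.toAddValuation
  obtain rfl : ω = depthZeroValuation V a γ := DepthZeroVal.eq_depthZeroValuation (v := V) hω
  refine ⟨extVal_of_map_C _ (depthZeroValuation_C a), Set.ext fun ρ => ⟨?_, ?_⟩⟩
  · rintro ⟨hρ, hle, hne⟩
    have hγ : ρ (X - C a) ≤ γ := (hle _).trans_eq (depthZeroValuation_X_sub_C a)
    obtain ⟨δ, hδ⟩ := WithTop.ne_top_iff_exists.mp (ne_top_of_le_ne_top WithTop.coe_ne_top hγ)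
    have hρδ : ρ = depthZeroValuation V a δ :=
      congrArg DFunLike.coe
        (eq_depthZeroValuation_of_le (v := V) (hρ.toAddValuation hv) hρ.2.2 hδ.symm hle)
    refine ⟨δ, (WithTop.coe_le_coe.mp (hδ ▸ hγ)).lt_of_ne ?_,
      hρδ ▸ depthZeroVal_depthZeroValuation V a δ⟩
    rintro rfl
    exact hne hρδ
  · rintro ⟨δ, hδγ, hρ⟩
    obtain rfl := DepthZeroVal.eq_depthZeroValuation (v := V) hρ
    refine ⟨extVal_of_map_C _ (depthZeroValuation_C a), depthZeroValuation_mono hδγ.le a,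
      fun h => hδγ.ne ?_⟩
    have hX := congrFun h (X - C a)
    rwa [depthZeroValuation_X_sub_C, depthZeroValuation_X_sub_C, WithTop.coe_inj] at hX
end

section
/- Let 𝒜 = (ρ_i)_{i∈A} be a totally ordered family of Λ∞-valued valuations on K[x] extending v (ρ_i < ρ_j for i < j in the totally ordered index set A). If every polynomial f ∈ K[x] is 𝒜-stable (its values ρ_i(f) are eventually constant), then the stability function ρ_𝒜(f) := eventual value of ρ_i(f) is a valuation on K[x] extending v. -/
open Polynomial Finset

variable {K : Type*} [Field K] {Λ : Type*} [AddCommGroup Λ] [LinearOrder Λ] [IsOrderedAddMonoid Λ]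

theorem ExtVal.of_eventually_eq {K Λ ι : Type*} [Field K] [AddCommGroup Λ] [LinearOrder Λ]
    {l : Filter ι} [l.NeBot] {v : K → WithTop Λ}
    {ρ : ι → Polynomial K → WithTop Λ} {μ : Polynomial K → WithTop Λ}
    (hval : ∀ᶠ i in l, ExtVal v (ρ i)) (hlim : ∀ f, ∀ᶠ i in l, ρ i f = μ f) : ExtVal v μ := by
  refine ⟨fun f g => ?_, fun f g => ?_, fun a => ?_⟩
  · obtain ⟨i, hi, hf, hg, hfg⟩ := (hval.and <| (hlim f).and <| (hlim g).and (hlim (f * g))).exists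
    rw [← hf, ← hg, ← hfg]
    exact hi.1 f g
  · obtain ⟨i, hi, hf, hg, hfg⟩ := (hval.and <| (hlim f).and <| (hlim g).and (hlim (f + g))).exists
    rw [← hf, ← hg, ← hfg]
    exact hi.2.1 f g
  · obtain ⟨i, hi, ha⟩ := (hval.and (hlim (C a))).exists
    rw [← ha]
    exact hi.2.2 a

theorem stable_limit_is_valuation_general (v : K → WithTop Λ)
    {A : Type*} [LinearOrder A] (ρ : A → Polynomial K → WithTop Λ)
    (hval : ∀ i, ExtVal v (ρ i))
    (ρA : Polynomial K → WithTop Λ)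
    (hlim : ∀ f : Polynomial K, ∃ i₀ : A, ∀ i, i₀ ≤ i → ρ i f = ρA f) :
    ExtVal v ρA := by
  obtain ⟨i₀, -⟩ := hlim 0
  have : Nonempty A := ⟨i₀⟩
  exact ExtVal.of_eventually_eq (.of_forall hval) fun f => Filter.eventually_atTop.2 (hlim f)

/-- if every polynomial is stable for a totally ordered family of
valuations extending `v`, then the stability function `ρ_𝒜` is a valuation on
`K[x]` extending `v`. -/
theorem stable_limit_is_valuation (v : K → WithTop Λ)
    {A : Type*} [LinearOrder A] (ρ : A → Polynomial K → WithTop Λ)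
    (hv : IsVal v) (hval : ∀ i, ExtVal v (ρ i))
    (hmono : ∀ i j : A, i ≤ j → ∀ f, ρ i f ≤ ρ j f)
    (hstrict : ∀ i j : A, i < j → ρ i ≠ ρ j)
    (ρA : Polynomial K → WithTop Λ)
    (hlim : ∀ f : Polynomial K, ∃ i₀ : A, ∀ i, i₀ ≤ i → ρ i f = ρA f) :
    ExtVal v ρA :=
  stable_limit_is_valuation_general v ρ hval ρA hlim
end

section
/- Let 𝒜 = (ρ_i)_{i∈A} be a totally ordered family of valuations on K[x]. Then the set of 𝒜-stable polynomials is closed under multiplication, and ρ_𝒜(fg) = ρ_𝒜(f) + ρ_𝒜(g) for stable f, g. Consequently, any monic unstable polynomial of minimal degree among unstable polynomials is irreducible in K[x]. -/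
open Polynomial Finset

variable {K : Type*} [Field K] {Λ : Type*} [AddCommGroup Λ] [LinearOrder Λ] [IsOrderedAddMonoid Λ]

/-- `f` is 𝒜-stable for the family `ρ`: its values are eventually constant. -/
def AStable {A : Type*} [LinearOrder A] (ρ : A → Polynomial K → WithTop Λ)
    (f : Polynomial K) : Prop :=
  ∃ i₀ : A, ∀ i, i₀ ≤ i → ρ i f = ρ i₀ f

/-
Once both `f` and `g` have stabilised, so has `ρ_i(fg) = ρ_i(f) + ρ_i(g)`. A nontrivial
factorisation `φ = ab` of a monic unstable `φ` of minimal degree would have both factors of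
smaller degree, hence stable, and then `φ` would be stable as well.
-/

section Stability

variable {A : Type*} [LinearOrder A] {ρ : A → K[X] → WithTop Λ}

omit [LinearOrder Λ] [IsOrderedAddMonoid Λ] in
theorem exists_forall_ge_mul_eq_add (hmul : ∀ i f g, ρ i (f * g) = ρ i f + ρ i g)
    {f g : K[X]} {i₀ j₀ : A} (hf : ∀ i, i₀ ≤ i → ρ i f = ρ i₀ f)
    (hg : ∀ j, j₀ ≤ j → ρ j g = ρ j₀ g) :
    ∃ k₀ : A, ∀ k, k₀ ≤ k → ρ k (f * g) = ρ i₀ f + ρ j₀ g :=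
  ⟨max i₀ j₀, fun k hk => by
    rw [hmul, hf k (le_of_max_le_left hk), hg k (le_of_max_le_right hk)]⟩

omit [LinearOrder Λ] [IsOrderedAddMonoid Λ] in
theorem AStable.mul (hmul : ∀ i f g, ρ i (f * g) = ρ i f + ρ i g) {f g : K[X]}
    (hf : AStable ρ f) (hg : AStable ρ g) : AStable ρ (f * g) := by
  obtain ⟨i₀, hi₀⟩ := hf
  obtain ⟨j₀, hj₀⟩ := hg
  obtain ⟨k₀, hk₀⟩ := exists_forall_ge_mul_eq_add hmul hi₀ hj₀
  exact ⟨k₀, fun k hk => by rw [hk₀ k hk, hk₀ k₀ le_rfl]⟩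

omit [AddCommGroup Λ] [LinearOrder Λ] [IsOrderedAddMonoid Λ] in
theorem aStable_C [Nonempty A] {v : K → WithTop Λ} (hC : ∀ i a, ρ i (C a) = v a) (a : K) :
    AStable ρ (C a) :=
  ⟨Classical.arbitrary A, fun i _ => by rw [hC, hC]⟩

omit [AddCommGroup Λ] [LinearOrder Λ] [IsOrderedAddMonoid Λ] in
theorem nonempty_of_monic_of_forall_not_aStable_degree_le {φ : K[X]} (hφ : φ.Monic)
    (hmin : ∀ ψ : K[X], ¬ AStable ρ ψ → φ.degree ≤ ψ.degree) : Nonempty A := by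
  by_contra hA
  have hφ0 : φ.degree ≤ (0 : K[X]).degree := hmin 0 fun ⟨i, _⟩ => hA ⟨i⟩
  exact hφ.ne_zero (degree_eq_bot.mp (le_bot_iff.mp hφ0))

omit [LinearOrder Λ] [IsOrderedAddMonoid Λ] in
theorem irreducible_of_monic_of_forall_not_aStable_degree_le
    (hmul : ∀ i f g, ρ i (f * g) = ρ i f + ρ i g) (hone : AStable ρ 1) {φ : K[X]}
    (hφ : φ.Monic) (hunst : ¬ AStable ρ φ)
    (hmin : ∀ ψ : K[X], ¬ AStable ρ ψ → φ.degree ≤ ψ.degree) : Irreducible φ := by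
  have hsmall : ∀ ψ : K[X], ψ.natDegree < φ.natDegree → AStable ρ ψ := by
    intro ψ hψ
    by_contra hψst
    exact (degree_lt_degree hψ).not_ge (hmin ψ hψst)
  refine hφ.irreducible_iff_natDegree.mpr ⟨fun h1 => hunst (h1 ▸ hone), ?_⟩
  rintro a b ha hb rfl
  by_contra! hab
  rw [ha.natDegree_mul hb] at hsmall
  exact hunst ((hsmall a (by omega)).mul hmul (hsmall b (by omega)))

end Stability

theorem stable_mul_and_irreducible_general (v : K → WithTop Λ)
    {A : Type*} [LinearOrder A] (ρ : A → Polynomial K → WithTop Λ)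
    (hval : ∀ i, ExtVal v (ρ i)) :
    (∀ f g : Polynomial K, AStable ρ f → AStable ρ g → AStable ρ (f * g)) ∧
    (∀ (f g : Polynomial K) (i₀ j₀ : A),
        (∀ i, i₀ ≤ i → ρ i f = ρ i₀ f) → (∀ j, j₀ ≤ j → ρ j g = ρ j₀ g) →
        ∃ k₀ : A, ∀ k, k₀ ≤ k → ρ k (f * g) = ρ i₀ f + ρ j₀ g) ∧
    (∀ φ : Polynomial K, φ.Monic → ¬ AStable ρ φ →
        (∀ ψ : Polynomial K, ¬ AStable ρ ψ → φ.degree ≤ ψ.degree) →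
        Irreducible φ) := by
  have hmul : ∀ i f g, ρ i (f * g) = ρ i f + ρ i g := fun i => (hval i).1
  refine ⟨fun f g hf hg => hf.mul hmul hg,
    fun f g i₀ j₀ hf hg => exists_forall_ge_mul_eq_add hmul hf hg, ?_⟩
  intro φ hφ hunst hmin
  have := nonempty_of_monic_of_forall_not_aStable_degree_le hφ hmin
  have hone : AStable ρ (1 : K[X]) := C_1 (R := K) ▸ aStable_C (fun i => (hval i).2.2) 1
  exact irreducible_of_monic_of_forall_not_aStable_degree_le hmul hone hφ hunst hmin

/-- stable polynomials are closed under multiplication with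
`ρ_𝒜(fg) = ρ_𝒜(f) + ρ_𝒜(g)`; consequently a monic unstable polynomial of minimal
degree among unstable polynomials is irreducible in `K[x]`. -/
theorem stable_mul_and_irreducible (v : K → WithTop Λ)
    {A : Type*} [LinearOrder A] (ρ : A → Polynomial K → WithTop Λ)
    (hv : IsVal v) (hval : ∀ i, ExtVal v (ρ i))
    (hmono : ∀ i j : A, i ≤ j → ∀ f, ρ i f ≤ ρ j f) :
    (∀ f g : Polynomial K, AStable ρ f → AStable ρ g → AStable ρ (f * g)) ∧
    (∀ (f g : Polynomial K) (i₀ j₀ : A),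
        (∀ i, i₀ ≤ i → ρ i f = ρ i₀ f) → (∀ j, j₀ ≤ j → ρ j g = ρ j₀ g) →
        ∃ k₀ : A, ∀ k, k₀ ≤ k → ρ k (f * g) = ρ i₀ f + ρ j₀ g) ∧
    (∀ φ : Polynomial K, φ.Monic → ¬ AStable ρ φ →
        (∀ ψ : Polynomial K, ¬ AStable ρ ψ → φ.degree ≤ ψ.degree) →
        Irreducible φ) :=
  stable_mul_and_irreducible_general v ρ hval
end

section
/- Let μ < ν be valuations on K[x] with values in a common ordered group, and let φ be a monic polynomial of minimal degree with μ(φ) < ν(φ). Then the augmented valuation ρ = [μ; φ, ν(φ)] satisfies μ < ρ ≤ ν. -/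
open Polynomial Finset

variable {K : Type*} [Field K] {Λ : Type*} [AddCommGroup Λ] [LinearOrder Λ] [IsOrderedAddMonoid Λ]

/-!
Minimality of `deg φ` forces `μ = ν` on polynomials of degree `< deg φ`. Consequently, for
`deg a < deg φ`, `μ (a + φ g) = min (μ a) (μ (φ g))`: were it larger, then `μ a = μ (φ g) < ν (φ g)`,
so `ν (a + φ g) = ν a = μ a < μ (a + φ g)`, contradicting `μ ≤ ν`. Peeling off one coefficient of a
`φ`-expansion `f = ∑ a_s φ^s` at a time gives `μ f ≤ min (μ a_s + s ν φ) = ρ f`, while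
`ν f ≥ min (ν a_s + s ν φ) = ρ f` because `ν a_s = μ a_s`. Finally `ρ φ = ν φ > μ φ`.
-/

lemma sum_range_succ_mul_pow {R : Type*} [CommSemiring R] (a : ℕ → R) (φ : R) (n : ℕ) :
    ∑ s ∈ range (n + 1), a s * φ ^ s = a 0 + φ * ∑ s ∈ range n, a (s + 1) * φ ^ s := by
  rw [sum_range_succ', pow_zero, mul_one, add_comm, mul_sum]
  congr 1
  exact sum_congr rfl fun s _ => by ring

theorem exists_expansion {φ : K[X]} (hmonic : φ.Monic) (hdeg : 0 < φ.degree) (f : K[X]) :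
    ∃ (n : ℕ) (a : ℕ → K[X]),
      (∀ s, (a s).degree < φ.degree) ∧ f = ∑ s ∈ range n, a s * φ ^ s := by
  induction f using (degree_lt_wf (R := K)).induction with
  | _ f ih =>
  rcases eq_or_ne f 0 with rfl | hf
  · exact ⟨0, fun _ => 0, fun _ => by rw [degree_zero]; exact bot_lt_of_lt hdeg, by simp⟩
  obtain ⟨n, a, ha, hq⟩ := ih (f /ₘ φ) (degree_divByMonic_lt f φ hf hdeg)
  refine ⟨n + 1, fun | 0 => f %ₘ φ | s + 1 => a s, ?_, ?_⟩
  · rintro (_ | s)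
    exacts [degree_modByMonic_lt f hmonic, ha s]
  · rw [sum_range_succ_mul_pow, ← hq]
    exact (modByMonic_add_div f φ).symm

section

variable {Γ : Type*} [AddCommGroup Γ] [LinearOrder Γ] {v : K → WithTop Γ}
  {μ ν : K[X] → WithTop Γ} {φ : K[X]}

lemma IsVal.map_zero (hv : IsVal v) : v 0 = ⊤ := (hv.1 0).2 rfl

lemma ExtVal.map_zero (hv : IsVal v) (hμ : ExtVal v μ) : μ 0 = ⊤ := by
  rw [← C_0, hμ.2.2, hv.map_zero]

lemma ExtVal.map_one (hv : IsVal v) (hμ : ExtVal v μ) : μ 1 = 0 := by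
  rw [← C_1, hμ.2.2, hv.2.1]

lemma ExtVal.map_pow (hv : IsVal v) (hμ : ExtVal v μ) (f : K[X]) (s : ℕ) :
    μ (f ^ s) = s • μ f := by
  induction s with
  | zero => simp [hμ.map_one hv]
  | succ s ih => rw [pow_succ, hμ.1, ih, succ_nsmul]

lemma ExtVal.inf_le_map_sum (hv : IsVal v) (hμ : ExtVal v μ) {ι : Type*} [DecidableEq ι]
    (S : Finset ι) (t : ι → K[X]) : S.inf (fun i => μ (t i)) ≤ μ (∑ i ∈ S, t i) := by
  induction S using Finset.induction_on with
  | empty => simp [hμ.map_zero hv]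
  | insert i S hi ih =>
    rw [inf_insert, sum_insert hi]
    exact (min_le_min_left _ ih).trans (hμ.2.1 _ _)

lemma AugVal.map_self {ρ : K[X] → WithTop Γ} {γ : WithTop Γ} (hv : IsVal v) (hμ : ExtVal v μ)
    (hdeg : 0 < φ.degree) (haug : AugVal μ φ γ ρ) : ρ φ = γ := by
  have hexp : φ = ∑ s ∈ range 2, (if s = 1 then 1 else 0) * φ ^ s := by simp
  rw [haug φ 2 _ (fun s => ?_) hexp]
  · rw [show range 2 = {0, 1} from rfl]
    simp [hμ.map_zero hv, hμ.map_one hv]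
  · split_ifs
    exacts [degree_one.trans_lt hdeg, by rw [degree_zero]; exact bot_lt_of_lt hdeg]

lemma map_eq_of_degree_lt_of_minimal (hv : IsVal v) (hμ : ExtVal v μ) (hν : ExtVal v ν)
    (hle : ∀ f, μ f ≤ ν f) (hmin : ∀ g : K[X], g.Monic → μ g < ν g → φ.degree ≤ g.degree)
    {a : K[X]} (ha : a.degree < φ.degree) : μ a = ν a := by
  rcases eq_or_ne a 0 with rfl | ha0
  · rw [hμ.map_zero hv, hν.map_zero hv]
  set m := a * C a.leadingCoeff⁻¹
  have hm : μ m = ν m := (hle m).eq_of_not_lt fun hlt =>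
    (hmin m (monic_mul_leadingCoeff_inv ha0) hlt).not_gt
      (by rwa [degree_mul_leadingCoeff_inv a ha0])
  have hma : m * C a.leadingCoeff = a := by
    rw [mul_assoc, ← C_mul, inv_mul_cancel₀ (leadingCoeff_ne_zero.2 ha0), C_1, mul_one]
  rw [← hma, hμ.1, hν.1, hμ.2.2, hν.2.2, hm]

lemma inf_le_map_expansion (hv : IsVal v) (hμ : ExtVal v μ) (hν : ExtVal v ν)
    (hle : ∀ f, μ f ≤ ν f) (hmin : ∀ g : K[X], g.Monic → μ g < ν g → φ.degree ≤ g.degree)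
    (n : ℕ) {a : ℕ → K[X]} (ha : ∀ s, (a s).degree < φ.degree) :
    (range n).inf (fun s => μ (a s) + s • ν φ) ≤ ν (∑ s ∈ range n, a s * φ ^ s) := by
  refine (inf_congr rfl fun s _ => ?_).trans_le (hν.inf_le_map_sum hv _ _)
  rw [hν.1, hν.map_pow hv, map_eq_of_degree_lt_of_minimal hv hμ hν hle hmin (ha s)]

end

section

variable {v : K → WithTop Λ} {μ ν : K[X] → WithTop Λ} {φ : K[X]}

lemma IsVal.map_neg_one (hv : IsVal v) : v (-1) = 0 := by
  have h : v (-1) + v (-1) = 0 := by rw [← hv.2.2.1, neg_one_mul, neg_neg, hv.2.1]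
  lift v (-1) to Λ using (fun ht => by simp [ht] at h) with c
  have hc : 2 • c = 2 • 0 := by rw [two_nsmul, nsmul_zero]; exact_mod_cast h
  rw [nsmul_right_injective two_ne_zero hc, WithTop.coe_zero]

lemma ExtVal.map_neg (hv : IsVal v) (hμ : ExtVal v μ) (f : K[X]) : μ (-f) = μ f := by
  rw [← neg_one_mul, ← C_1, ← C_neg, hμ.1, hμ.2.2, hv.map_neg_one, zero_add]

lemma ExtVal.map_add_eq_of_lt (hv : IsVal v) (hμ : ExtVal v μ) {f g : K[X]} (h : μ f < μ g) :
    μ (f + g) = μ f := by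
  refine le_antisymm ?_ (min_eq_left h.le ▸ hμ.2.1 f g)
  have hf := hμ.2.1 (f + g) (-g)
  rw [add_neg_cancel_right, hμ.map_neg hv] at hf
  exact (min_le_iff.1 hf).resolve_right h.not_ge

lemma map_add_mul_le_of_minimal (hv : IsVal v) (hμ : ExtVal v μ) (hν : ExtVal v ν)
    (hle : ∀ f, μ f ≤ ν f) (hφ : μ φ < ν φ)
    (hmin : ∀ g : K[X], g.Monic → μ g < ν g → φ.degree ≤ g.degree)
    {a : K[X]} (ha : a.degree < φ.degree) (g : K[X]) : μ (a + φ * g) ≤ μ a := by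
  by_contra! hlt
  have hμφg : μ (φ * g) = μ a := by
    have h := hμ.map_add_eq_of_lt hv (f := -a) (g := a + φ * g) (by rwa [hμ.map_neg hv])
    rwa [neg_add_cancel_left, hμ.map_neg hv] at h
  have hνa : ν a = μ a := (map_eq_of_degree_lt_of_minimal hv hμ hν hle hmin ha).symm
  have hg : μ g ≠ ⊤ := fun h => hlt.ne_top (by rw [← hμφg, hμ.1, h, add_top])
  have hνlt : ν a < ν (φ * g) := by
    rw [hνa, ← hμφg, hμ.1, hν.1]
    exact (WithTop.add_lt_add_right hg hφ).trans_le (add_le_add_right (hle g) _)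
  exact hlt.not_ge ((hle _).trans (hν.map_add_eq_of_lt hv hνlt ▸ hνa).le)

lemma map_add_mul_eq_min_of_minimal (hv : IsVal v) (hμ : ExtVal v μ) (hν : ExtVal v ν)
    (hle : ∀ f, μ f ≤ ν f) (hφ : μ φ < ν φ)
    (hmin : ∀ g : K[X], g.Monic → μ g < ν g → φ.degree ≤ g.degree)
    {a : K[X]} (ha : a.degree < φ.degree) (g : K[X]) :
    μ (a + φ * g) = min (μ a) (μ (φ * g)) := by
  have hle_a := map_add_mul_le_of_minimal hv hμ hν hle hφ hmin ha g
  refine le_antisymm (le_min hle_a ?_) (hμ.2.1 _ _)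
  by_contra! hlt
  have h := hμ.map_add_eq_of_lt hv (f := -(φ * g)) (g := a + φ * g) (by rwa [hμ.map_neg hv])
  rw [neg_add_cancel_comm_assoc, hμ.map_neg hv] at h
  exact (hlt.trans_le hle_a).ne h.symm

lemma map_expansion_le (hv : IsVal v) (hμ : ExtVal v μ) (hν : ExtVal v ν)
    (hle : ∀ f, μ f ≤ ν f) (hφ : μ φ < ν φ)
    (hmin : ∀ g : K[X], g.Monic → μ g < ν g → φ.degree ≤ g.degree)
    (n : ℕ) {a : ℕ → K[X]} (ha : ∀ s, (a s).degree < φ.degree) :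
    μ (∑ s ∈ range n, a s * φ ^ s) ≤ (range n).inf fun s => μ (a s) + s • ν φ := by
  induction n generalizing a with
  | zero => simp [hμ.map_zero hv]
  | succ n ih =>
    rw [sum_range_succ_mul_pow, map_add_mul_eq_min_of_minimal hv hμ hν hle hφ hmin (ha 0)]
    refine Finset.le_inf fun s hs => ?_
    rcases s with _ | s
    · simp
    · have hs : s ∈ range n := mem_range.2 (by simpa using hs)
      calc min (μ (a 0)) (μ (φ * ∑ s ∈ range n, a (s + 1) * φ ^ s))
          ≤ μ φ + μ (∑ s ∈ range n, a (s + 1) * φ ^ s) := hμ.1 φ _ ▸ min_le_right _ _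
        _ ≤ ν φ + (μ (a (s + 1)) + s • ν φ) :=
          add_le_add hφ.le ((ih fun s => ha (s + 1)).trans (inf_le hs))
        _ = μ (a (s + 1)) + (s + 1 : ℕ) • ν φ := by rw [succ_nsmul]; abel

end

theorem augmentation_between_general (v : K → WithTop Λ)
    (μ ν : Polynomial K → WithTop Λ) (hv : IsVal v)
    (hμ : ExtVal v μ) (hν : ExtVal v ν)
    (hle : ∀ f : Polynomial K, μ f ≤ ν f)
    (φ : Polynomial K) (hmonic : φ.Monic) (hφ : μ φ < ν φ)
    (hmin : ∀ g : Polynomial K, g.Monic → μ g < ν g → φ.degree ≤ g.degree)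
    (ρ : Polynomial K → WithTop Λ) (haug : AugVal μ φ (ν φ) ρ) :
    (∀ f : Polynomial K, μ f ≤ ρ f) ∧ μ ≠ ρ ∧ (∀ f : Polynomial K, ρ f ≤ ν f) := by
  have hdeg : 0 < φ.degree :=
    hmonic.degree_pos.2 (by rintro rfl; simp [hμ.map_one hv, hν.map_one hv] at hφ)
  refine ⟨fun f => ?_, fun h => hφ.ne (h ▸ haug.map_self hv hμ hdeg), fun f => ?_⟩
  · obtain ⟨n, a, ha, rfl⟩ := exists_expansion hmonic hdeg f
    exact haug _ n a ha rfl ▸ map_expansion_le hv hμ hν hle hφ hmin n ha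
  · obtain ⟨n, a, ha, rfl⟩ := exists_expansion hmonic hdeg f
    exact haug _ n a ha rfl ▸ inf_le_map_expansion hv hμ hν hle hmin n ha

/-- if `μ < ν` and `φ` is monic of minimal degree with `μ(φ) < ν(φ)`,
then the augmented valuation `ρ = [μ; φ, ν(φ)]` satisfies `μ < ρ ≤ ν`. -/
theorem augmentation_between (v : K → WithTop Λ)
    (μ ν : Polynomial K → WithTop Λ) (hv : IsVal v)
    (hμ : ExtVal v μ) (hν : ExtVal v ν)
    (hle : ∀ f : Polynomial K, μ f ≤ ν f) (hne : μ ≠ ν)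
    (φ : Polynomial K) (hmonic : φ.Monic) (hφ : μ φ < ν φ)
    (hmin : ∀ g : Polynomial K, g.Monic → μ g < ν g → φ.degree ≤ g.degree)
    (ρ : Polynomial K → WithTop Λ) (haug : AugVal μ φ (ν φ) ρ) :
    (∀ f : Polynomial K, μ f ≤ ρ f) ∧ μ ≠ ρ ∧ (∀ f : Polynomial K, ρ f ≤ ν f) :=
  augmentation_between_general v μ ν hv hμ hν hle φ hmonic hφ hmin ρ haug
end

section
/- Let μ < ν be valuations on K[x] and φ a monic polynomial of minimal degree with μ(φ) < ν(φ). Then the kernel of the canonical graded-algebra homomorphism gr_μ(K[x]) → gr_ν(K[x]) (sending in_μ f to in_ν f if μ(f)=ν(f) and to 0 otherwise) is the principal prime ideal generated by in_μ(φ). -/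
open Polynomial Finset

variable {K : Type*} [Field K] {Λ : Type*} [AddCommGroup Λ] [LinearOrder Λ] [IsOrderedAddMonoid Λ]

/-! Divide `f = q φ + r` with `deg r < deg φ`. By minimality of `deg φ`, `μ` and `ν` agree on
nonzero polynomials of degree `< deg φ` (a monic one cannot grow, and units keep their value),
while `μ(qφ) < ν(qφ)` because `μ φ < ν φ`. Hence `μ f < ν f` exactly when `μ r > μ f`, i.e.
when `φ ∣_μ f`. Primality then comes from `μ ≤ ν`: `μ(fg) < ν(fg)` forces `μ f < ν f` or
`μ g < ν g`. -/

namespace ExtVal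

variable {v : K → WithTop Λ} {μ : K[X] → WithTop Λ}

noncomputable def toAddValuation_s19 (hv : IsVal v) (hμ : ExtVal v μ) : AddValuation K[X] (WithTop Λ) :=
  AddValuation.of μ (by rw [← C_0, hμ.2.2, hv.1]) (by rw [← C_1, hμ.2.2, hv.2.1]) hμ.2.1 hμ.1

theorem coe_toAddValuation (hv : IsVal v) (hμ : ExtVal v μ) : ⇑(hμ.toAddValuation_s19 hv) = μ :=
  rfl

end ExtVal

namespace AddValuation

section Ring

variable {R : Type*} [Ring R] {μ ν : AddValuation R (WithTop Λ)}

theorem map_mul_lt_map_mul_iff (hle : ∀ f, μ f ≤ ν f) {f g : R} (hf : μ f ≠ ⊤)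
    (hg : μ g ≠ ⊤) : μ (f * g) < ν (f * g) ↔ μ f < ν f ∨ μ g < ν g := by
  rw [map_mul, map_mul]
  constructor
  · contrapose!
    rintro ⟨hf', hg'⟩
    rw [le_antisymm (hle f) hf', le_antisymm (hle g) hg']
  · rintro (h | h)
    · exact WithTop.add_lt_add_of_lt_of_le hg h (hle g)
    · exact WithTop.add_lt_add_of_le_of_lt hf (hle f) h

theorem map_unit_ne_top [Nontrivial R] (u : Rˣ) : μ u ≠ ⊤ := fun h => by
  simpa [h] using μ.map_mul u ↑u⁻¹

theorem map_eq_of_isUnit [Nontrivial R] (hle : ∀ f, μ f ≤ ν f) {u : R} (hu : IsUnit u) :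
    μ u = ν u := by
  obtain ⟨u, rfl⟩ := hu
  refine (hle u).eq_of_not_lt fun h => ?_
  simpa using (map_mul_lt_map_mul_iff hle (map_unit_ne_top u) (map_unit_ne_top u⁻¹)).2 (.inl h)

theorem lt_map_mul_of_le (hle : ∀ f, μ f ≤ ν f) {φ : R} (hφ : μ φ < ν φ) {f q : R}
    (hf : μ f ≠ ⊤) (h : μ f ≤ μ (q * φ)) : μ f < ν (q * φ) := by
  by_cases hq : μ q = ⊤
  · have hν : ν (q * φ) = ⊤ := top_unique (by simpa [map_mul, hq] using hle (q * φ))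
    exact hν ▸ hf.lt_top
  · exact h.trans_lt ((map_mul_lt_map_mul_iff hle hq hφ.ne_top).2 (.inr hφ))

end Ring

variable {μ ν : AddValuation K[X] (WithTop Λ)} {φ : K[X]}

theorem map_lt_of_muDvd (hle : ∀ f, μ f ≤ ν f) (hφ : μ φ < ν φ) {f : K[X]} (hf : μ f ≠ ⊤)
    (hdvd : MuDvd μ φ f) : μ f < ν f := by
  obtain ⟨q, hq⟩ := hdvd
  have hqφ : μ (q * φ) = μ f := by simpa using μ.map_sub_eq_of_lt_left hq
  calc μ f < min (ν (f - q * φ)) (ν (q * φ)) :=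
        lt_min (hq.trans_le (hle _)) (lt_map_mul_of_le hle hφ hf hqφ.ge)
    _ ≤ ν f := by simpa using ν.map_add (f - q * φ) (q * φ)

theorem map_eq_of_degree_lt (hle : ∀ f, μ f ≤ ν f)
    (hmin : ∀ g : K[X], g.Monic → μ g < ν g → φ.degree ≤ g.degree) {g : K[X]} (hg0 : g ≠ 0)
    (hg : g.degree < φ.degree) : μ g = ν g := by
  have hlc : g.leadingCoeff ≠ 0 := leadingCoeff_ne_zero.2 hg0
  have hnorm : μ (g * C g.leadingCoeff⁻¹) = ν (g * C g.leadingCoeff⁻¹) :=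
    (hle _).eq_of_not_lt fun h => (hmin _ (monic_mul_leadingCoeff_inv hg0) h).not_gt
      (by rwa [degree_mul_leadingCoeff_inv _ hg0])
  have hsplit : g * C g.leadingCoeff⁻¹ * C g.leadingCoeff = g := by
    rw [mul_assoc, ← C_mul, inv_mul_cancel₀ hlc, C_1, mul_one]
  rw [← hsplit, map_mul μ, map_mul ν, hnorm, map_eq_of_isUnit hle (isUnit_C.2 hlc.isUnit)]

theorem muDvd_of_map_lt (hle : ∀ f, μ f ≤ ν f) (hmonic : φ.Monic) (hφ : μ φ < ν φ)
    (hmin : ∀ g : K[X], g.Monic → μ g < ν g → φ.degree ≤ g.degree) {f : K[X]}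
    (h : μ f < ν f) : MuDvd μ φ f := by
  refine ⟨f /ₘ φ, ?_⟩
  rw [mul_comm, ← modByMonic_eq_sub_mul_div]
  set r := f %ₘ φ
  by_contra! hrf
  have hr : μ r ≠ ⊤ := (hrf.trans_lt (h.trans_le le_top)).ne
  have hrν : μ r = ν r := map_eq_of_degree_lt hle hmin (by rintro h0; simp [h0] at hr)
    (degree_modByMonic_lt f hmonic)
  have hf : r + f /ₘ φ * φ = f := by rw [mul_comm]; exact modByMonic_add_div f φ
  have hqφ : μ r ≤ μ (f /ₘ φ * φ) := by
    have := μ.map_sub f r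
    rwa [min_eq_right hrf, ← hf, add_sub_cancel_left] at this
  have hνf : ν f = μ r := by
    rw [← hf, ν.map_add_eq_of_lt_left (hrν ▸ lt_map_mul_of_le hle hφ hr hqφ), hrν]
  exact (h.trans_le (hνf.le.trans hrf)).false

end AddValuation

open AddValuation

/-- Stated on homogeneous elements: a nonzero `in_μ f` is in the kernel iff
`μ(f) < ν(f)` iff `φ ∣_μ f`; and the ideal `(in_μ φ)` is prime and proper. -/
theorem kernel_eq_prime_ideal_general (v : K → WithTop Λ)
    (μ ν : Polynomial K → WithTop Λ) (hv : IsVal v)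
    (hμ : ExtVal v μ) (hν : ExtVal v ν)
    (hle : ∀ f : Polynomial K, μ f ≤ ν f)
    (φ : Polynomial K) (hmonic : φ.Monic) (hφ : μ φ < ν φ)
    (hmin : ∀ g : Polynomial K, g.Monic → μ g < ν g → φ.degree ≤ g.degree) :
    (∀ f : Polynomial K, f ≠ 0 → μ f ≠ ⊤ → (μ f < ν f ↔ MuDvd μ φ f)) ∧
      (∀ f g : Polynomial K, MuDvd μ φ (f * g) → MuDvd μ φ f ∨ MuDvd μ φ g) ∧
      ¬ MuDvd μ φ 1 := by
  obtain ⟨μ, rfl⟩ : ∃ μ' : AddValuation K[X] (WithTop Λ), ⇑μ' = μ :=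
    ⟨_, hμ.coe_toAddValuation hv⟩
  obtain ⟨ν, rfl⟩ : ∃ ν' : AddValuation K[X] (WithTop Λ), ⇑ν' = ν :=
    ⟨_, hν.coe_toAddValuation hv⟩
  have hiff : ∀ f, μ f ≠ ⊤ → (μ f < ν f ↔ MuDvd μ φ f) := fun f hf =>
    ⟨muDvd_of_map_lt hle hmonic hφ hmin, map_lt_of_muDvd hle hφ hf⟩
  refine ⟨fun f _ => hiff f, fun f g hfg => ?_, fun h1 => ?_⟩
  · have hfg_top : μ (f * g) ≠ ⊤ := hfg.elim fun _ hq => hq.ne_top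
    have hf : μ f ≠ ⊤ := fun h => hfg_top (by simp [μ.map_mul, h])
    have hg : μ g ≠ ⊤ := fun h => hfg_top (by simp [μ.map_mul, h])
    rw [← hiff f hf, ← hiff g hg, ← map_mul_lt_map_mul_iff hle hf hg]
    exact (hiff _ hfg_top).2 hfg
  · simpa using map_lt_of_muDvd hle hφ (by simp) h1

/-- the kernel of the canonical graded homomorphism
`gr_μ(K[x]) → gr_ν(K[x])` is the principal prime ideal generated by `in_μ φ`.
Stated on homogeneous elements: a nonzero `in_μ f` is in the kernel iff
`μ(f) < ν(f)` iff `φ ∣_μ f`; and the ideal `(in_μ φ)` is prime and proper. -/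
theorem kernel_eq_prime_ideal (v : K → WithTop Λ)
    (μ ν : Polynomial K → WithTop Λ) (hv : IsVal v)
    (hμ : ExtVal v μ) (hν : ExtVal v ν)
    (hle : ∀ f : Polynomial K, μ f ≤ ν f) (hne : μ ≠ ν)
    (φ : Polynomial K) (hmonic : φ.Monic) (hφ : μ φ < ν φ)
    (hmin : ∀ g : Polynomial K, g.Monic → μ g < ν g → φ.degree ≤ g.degree) :
    (∀ f : Polynomial K, f ≠ 0 → μ f ≠ ⊤ → (μ f < ν f ↔ MuDvd μ φ f)) ∧
      (∀ f g : Polynomial K, MuDvd μ φ (f * g) → MuDvd μ φ f ∨ MuDvd μ φ g) ∧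
      ¬ MuDvd μ φ 1 :=
  kernel_eq_prime_ideal_general v μ ν hv hμ hν hle φ hmonic hφ hmin
end
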